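/- Let A be a Hopf algebra over k with bijective antipode S, let Ω¹(A) be a left covariant first order differential calculus on A with left-invariant basis ω₁, …, ω_n (data θ_ij, χ_i as in the covariant calculus setup), and let ∇(f) = Σ_i (χ_i ∘ S⁻²) ⊳ f(ω_i) be the associated hom-connection. Assume Ω¹(A) extends to a differential graded algebra such that ∇ is flat, and let λ : A → k be a right integral on the Hopf algebra A, i.e. λ(a₍₁₎) a₍₂₎ = λ(a)·1 for all a ∈ A. Then λ ∘ ∇ = 0, and consequently there exists a unique k-linear map φ : coker(∇) → k such that λ = φ ∘ Λ, where Λ : A → coker(∇) is the ∇-integral. -/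

import Mathlib

/-!
Integrating `(χ_i ∘ S⁻²) ⊳ b` against a right integral `λ` gives `λ(b) · χ_i(S⁻²(1))`, and
`χ_i(1) = 0` by the twisted Leibniz rule, so `λ` kills the image of `∇` and descends to its cokernel.
-/

open TensorProduct

namespace Stmt15

variable {k A : Type*} [Field k] [Ring A] [HopfAlgebra k A] {n : ℕ}

/-- The left action `f ⊳ a = (id ⊗ f)(Δ a)` of a functional `f : A → k` on `A`. -/
noncomputable def hit (f : A →ₗ[k] k) : A →ₗ[k] A :=
  (TensorProduct.rid k A).toLinearMap ∘ₗ (LinearMap.lTensor A f) ∘ₗ Coalgebra.comul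

variable (θ : Fin n → Fin n → (A →ₗ[k] k))

/-- The right `A`-action on `Ω¹(A)` in left coordinates. -/
noncomputable def ract (x : Fin n → A) (a : A) : Fin n → A :=
  fun i => ∑ j, x j * hit (θ j i) a

/-- `Hom_A(Ω¹(A), A)`: the right `A`-linear maps `Ω¹(A) → A`. -/
noncomputable def homD : Submodule k ((Fin n → A) →ₗ[k] A) where
  carrier := {f | ∀ (x : Fin n → A) (a : A), f (ract θ x a) = f x * a}
  add_mem' {f g} hf hg := by
    intro x a
    simp only [LinearMap.add_apply, hf x a, hg x a, add_mul]
  zero_mem' := by intro x a; simp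
  smul_mem' c f hf := by
    intro x a
    simp only [LinearMap.smul_apply, hf x a, smul_mul_assoc]

/-- The left-invariant basis `ω_i` of `Ω¹(A)`. -/
def om (i : Fin n) : Fin n → A := Pi.single i 1

def IsRightIntegral (lam : A →ₗ[k] k) : Prop :=
  ∀ a : A, TensorProduct.lid k A (LinearMap.rTensor A lam (Coalgebra.comul a)) = lam a • (1 : A)

theorem IsRightIntegral.map_hit {lam : A →ₗ[k] k} (hlam : IsRightIntegral lam)
    (g : A →ₗ[k] k) (a : A) : lam (hit g a) = lam a * g 1 := by
  -- both composites are `λ ⊗ g` followed by multiplication in `k`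
  have hcomm : lam ∘ₗ (TensorProduct.rid k A).toLinearMap ∘ₗ LinearMap.lTensor A g
      = g ∘ₗ (TensorProduct.lid k A).toLinearMap ∘ₗ LinearMap.rTensor A lam := by
    ext x y
    simp [mul_comm]
  calc lam (hit g a)
      = g (TensorProduct.lid k A (LinearMap.rTensor A lam (Coalgebra.comul a))) :=
        LinearMap.congr_fun hcomm (Coalgebra.comul a)
    _ = lam a * g 1 := by rw [hlam, map_smul, smul_eq_mul]

theorem apply_one_eq_zero_of_twisted_leibniz (χ : Fin n → (A →ₗ[k] k))
    (hθone : ∀ i j : Fin n, θ i j 1 = if i = j then (1 : k) else 0)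
    (hχ : ∀ (i : Fin n) (a b : A),
      χ i (a * b) = (∑ j, χ j a * θ j i b) + Coalgebra.counit a * χ i b)
    (i : Fin n) : χ i 1 = 0 := by
  have h := hχ i 1 1
  simp only [mul_one, one_mul, hθone, mul_ite, mul_zero, Finset.sum_ite_eq',
    Finset.mem_univ, if_true, Bialgebra.counit_one] at h
  exact left_eq_add.mp h

theorem _root_.Submodule.existsUnique_comp_mkQ_eq {R M N : Type*} [Ring R] [AddCommGroup M]
    [Module R M] [AddCommGroup N] [Module R N] {p : Submodule R M} {f : M →ₗ[R] N}
    (h : p ≤ LinearMap.ker f) : ∃! φ : (M ⧸ p) →ₗ[R] N, ∀ a : M, φ (p.mkQ a) = f a :=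
  ⟨p.liftQ f h, fun _ => rfl, fun _ hφ => p.linearMap_qext (LinearMap.ext hφ)⟩

theorem integral_factors_through_coker
    (S' : A →ₗ[k] A)
    (hS'l : ∀ a, S' (HopfAlgebra.antipode (R := k) a) = a)
    (χ : Fin n → (A →ₗ[k] k))
    (hθone : ∀ i j : Fin n, θ i j 1 = if i = j then (1 : k) else 0)
    (hχ : ∀ (i : Fin n) (a b : A),
      χ i (a * b) = (∑ j, χ j a * θ j i b) + Coalgebra.counit a * χ i b)
    (lam : A →ₗ[k] k)
    (hlam : ∀ a : A,
      (TensorProduct.lid k A) ((LinearMap.rTensor A lam) (Coalgebra.comul a))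
        = lam a • (1 : A))
    (nabla : homD θ →ₗ[k] A)
    (hnabla : ∀ f : homD θ,
      nabla f = ∑ i, hit ((χ i) ∘ₗ S' ∘ₗ S') (f.1 (om i))) :
    (∀ f : homD θ, lam (nabla f) = 0) ∧
    (∃! φ : (A ⧸ LinearMap.range nabla) →ₗ[k] k,
      ∀ a : A, φ (Submodule.mkQ (LinearMap.range nabla) a) = lam a) := by
  have hS'_one : S' 1 = 1 := by simpa using hS'l 1
  have hχ_one := apply_one_eq_zero_of_twisted_leibniz θ χ hθone hχ
  have hzero : ∀ f : homD θ, lam (nabla f) = 0 := fun f => by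
    simp [hnabla, IsRightIntegral.map_hit hlam, hS'_one, hχ_one]
  refine ⟨hzero, Submodule.existsUnique_comp_mkQ_eq ?_⟩
  rintro _ ⟨f, rfl⟩
  exact hzero f

end Stmt15
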